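/- arXiv:2203.00212 — 2 statements merged into one kernel-verified Lean document; each statement's English description precedes it below -/
import Mathlib

section
/- Define the degree-(d+1) homogeneous block-multilinear form f : {±1}^{2^d × (d+1)} → ℝ by f(x_1,…,x_{d+1}) = Σ_{a ∈ {0,1}^d} g_a(x_1,…,x_d) · x_{d+1}(addr(a)), where g_a(x_1,…,x_d) = Π_{b=1}^d (x_b(1) + (−1)^{a_b} x_b(2))/2 and addr(a) ∈ [2^d] is the integer with binary expansion a. Then ‖f‖_∞ := max over {±1}-inputs of |f| equals 1. -/
noncomputable section
namespace AddrExample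

/-- The real value of a ±1 bit encoded as a Boolean. -/
def bsign (b : Bool) : ℝ := if b then 1 else -1

/-- The integer in [2^d] whose binary expansion is `a`. -/
def addr {d : ℕ} (a : Fin d → Bool) : Fin (2 ^ d) :=
  finFunctionFinEquiv (fun i => if a i then (1 : Fin 2) else 0)

/-- The factor polynomial g_a(x_1,…,x_d) = ∏_b (x_b(1) + (−1)^{a_b} x_b(2))/2. -/
def g {d : ℕ} (hd : 0 < d) (a : Fin d → Bool) (x : Fin (d + 1) → Fin (2 ^ d) → Bool) : ℝ :=
  ∏ b : Fin d,
    (bsign (x b.castSucc ⟨0, Nat.two_pow_pos d⟩) +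
      (if a b then -1 else 1) * bsign (x b.castSucc ⟨1, Nat.one_lt_two_pow_iff.mpr (by omega)⟩)) / 2

/-- The address-function block-multilinear form
f(x_1,…,x_{d+1}) = Σ_a g_a(x_1,…,x_d) · x_{d+1}(addr(a)). -/
def addrForm {d : ℕ} (hd : 0 < d) (x : Fin (d + 1) → Fin (2 ^ d) → Bool) : ℝ :=
  ∑ a : Fin d → Bool, g hd a x * bsign (x (Fin.last d) (addr a))


lemma abs_bsign (b : Bool) : |bsign b| = 1 := by
  cases b <;> simp [bsign]

lemma abs_addrForm_eq_one {d : ℕ} (hd : 0 < d)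
    (x : Fin (d + 1) → Fin (2 ^ d) → Bool) : |addrForm hd x| = 1 := by
  set i0 : Fin (2 ^ d) := ⟨0, Nat.two_pow_pos d⟩ with hi0
  set i1 : Fin (2 ^ d) := ⟨1, Nat.one_lt_two_pow_iff.mpr (by omega)⟩ with hi1
  set a₀ : Fin d → Bool := fun b => x b.castSucc i0 != x b.castSucc i1 with ha₀
  have hform : addrForm hd x = g hd a₀ x * bsign (x (Fin.last d) (addr a₀)) := by
    unfold addrForm
    apply Finset.sum_eq_single_of_mem a₀ (Finset.mem_univ _)
    intro a _ hne
    have hz : g hd a x = 0 := by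
      obtain ⟨b, hb⟩ := Function.ne_iff.mp hne
      unfold g
      apply Finset.prod_eq_zero (Finset.mem_univ b)
      rcases h1 : x b.castSucc i0 <;> rcases h2 : x b.castSucc i1 <;>
        simp [ha₀, h1, h2] at hb <;>
        simp [hb, bsign, h1, h2]
    simp [hz]
  have hg : g hd a₀ x = ∏ b : Fin d, bsign (x b.castSucc i0) := by
    unfold g
    apply Finset.prod_congr rfl
    intro b _
    rcases h1 : x b.castSucc i0 <;> rcases h2 : x b.castSucc i1 <;>
      simp [ha₀, bsign, h1, h2] <;> ring
  rw [hform, abs_mul, abs_bsign, mul_one, hg, Finset.abs_prod]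
  simp [abs_bsign]

theorem stmt11 {d : ℕ} (hd : 0 < d) :
    (⨆ x : Fin (d + 1) → Fin (2 ^ d) → Bool, |addrForm hd x|) = 1 := by
  simp_rw [abs_addrForm_eq_one hd]
  exact ciSup_const

end AddrExample
end
end

section
/- With f and g_a as in the address-function example (f(x_1,…,x_{d+1}) = Σ_{a∈{0,1}^d} g_a(x_1,…,x_d)·x_{d+1}(addr(a)), g_a = Π_b (x_b(1)+(−1)^{a_b}x_b(2))/2, n = 2^d), for every i = addr(a) ∈ [n] the influence of the variable x_{d+1}(i) on f equals 2^{−d}, and consequently Σ_{i=1}^n √(Inf_{d+1,i}(f)) = 2^{d/2}. -/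
/-! Flipping the data bit x_{d+1}(addr a) changes f by 2 g_a, because g_a does not read the last block
and addr is a bijection. Each factor of g_a squares to the indicator of x_b(1) = ±x_b(2), an event of
probability 1/2 depending on block b alone, so E[g_a²] = 2^{-d}. -/

noncomputable section
namespace AddrExample

/-- Update the variable of the last (data) block at position `i` to value `v`. -/
def dupdate {d : ℕ} (x : Fin (d + 1) → Fin (2 ^ d) → Bool) (i : Fin (2 ^ d)) (v : Bool) :
    Fin (d + 1) → Fin (2 ^ d) → Bool :=
  Function.update x (Fin.last d) (Function.update (x (Fin.last d)) i v)

/-- The influence of the data-block variable x_{d+1}(i) on the address form. -/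
def dinf {d : ℕ} (hd : 0 < d) (i : Fin (2 ^ d)) : ℝ :=
  (∑ x : Fin (d + 1) → Fin (2 ^ d) → Bool,
      ((addrForm hd (dupdate x i true) - addrForm hd (dupdate x i false)) / 2) ^ 2) /
    2 ^ (2 ^ d * (d + 1))

lemma bsign_add_signed_div_two_sq (c u v : Bool) :
    ((bsign u + (if c then -1 else 1) * bsign v) / 2) ^ 2 = if u = xor c v then 1 else 0 := by
  cases c <;> cases u <;> cases v <;> norm_num [bsign]

lemma sum_ite_apply_eq_comp_apply {ι : Type*} [Fintype ι] [DecidableEq ι] {i j : ι} (hji : j ≠ i)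
    (φ : Bool → Bool) :
    ∑ y : ι → Bool, (if y i = φ (y j) then (1 : ℝ) else 0) = 2 ^ Fintype.card ι / 2 := by
  have : Nonempty ι := ⟨i⟩
  have hcard : (2 : ℝ) ^ (Fintype.card ι - 1) = 2 ^ Fintype.card ι / 2 := by
    rw [pow_sub₀ _ two_ne_zero Fintype.card_pos, pow_one, div_eq_mul_inv]
  -- once the coordinates other than `i` are fixed, exactly one value of `y i` qualifies
  rw [← (Equiv.funSplitAt i Bool).symm.sum_comp, Fintype.sum_prod_type_right]
  simp [Equiv.funSplitAt, hji, hcard]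

lemma sum_prod_apply_castSucc {R Y : Type*} [CommSemiring R] [Fintype Y] {d : ℕ}
    (h : Fin d → Y → R) :
    ∑ x : Fin (d + 1) → Y, ∏ b, h b (x b.castSucc) = Fintype.card Y * ∏ b, ∑ y, h b y := by
  rw [← (Fin.snocEquiv fun _ => Y).sum_comp, Fintype.sum_prod_type]
  simp [Fintype.prod_sum]

lemma addr_bijective {d : ℕ} : Function.Bijective (addr (d := d)) := by
  have : (fun (a : Fin d → Bool) i => if a i then (1 : Fin 2) else 0) = (finTwoEquiv.symm ∘ ·) := by
    funext a i; simp [finTwoEquiv, Bool.cond_eq_ite]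
  exact finFunctionFinEquiv.bijective.comp (this ▸ finTwoEquiv.symm.bijective.comp_left)

lemma g_dupdate {d : ℕ} (hd : 0 < d) (a : Fin d → Bool) (x : Fin (d + 1) → Fin (2 ^ d) → Bool)
    (i : Fin (2 ^ d)) (v : Bool) : g hd a (dupdate x i v) = g hd a x := by
  simp only [g, dupdate, Function.update_of_ne (Fin.castSucc_lt_last _).ne]

lemma addrForm_dupdate_sub_div_two {d : ℕ} (hd : 0 < d) (a : Fin d → Bool)
    (x : Fin (d + 1) → Fin (2 ^ d) → Bool) :
    (addrForm hd (dupdate x (addr a) true) - addrForm hd (dupdate x (addr a) false)) / 2 =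
      g hd a x := by
  rw [addrForm, addrForm, ← Finset.sum_sub_distrib, Finset.sum_eq_single a]
  · simp only [g_dupdate]
    simp [dupdate, bsign]
  · intro a' _ ha'
    simp only [g_dupdate]
    simp [dupdate, addr_bijective.injective.ne ha']
  · simp

lemma sum_g_sq {d : ℕ} (hd : 0 < d) (a : Fin d → Bool) :
    ∑ x, g hd a x ^ 2 = 2 ^ (2 ^ d * (d + 1)) / 2 ^ d := by
  simp only [g, ← Finset.prod_pow, bsign_add_signed_div_two_sq]
  set i₀ : Fin (2 ^ d) := ⟨0, Nat.two_pow_pos d⟩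
  set i₁ : Fin (2 ^ d) := ⟨1, Nat.one_lt_two_pow_iff.mpr hd.ne'⟩
  have h10 : i₁ ≠ i₀ := by simp [i₀, i₁]
  rw [sum_prod_apply_castSucc fun b (y : Fin (2 ^ d) → Bool) ↦
    if y i₀ = xor (a b) (y i₁) then (1 : ℝ) else 0]
  simp only [sum_ite_apply_eq_comp_apply h10, Finset.prod_const, Finset.card_univ, Fintype.card_fin,
    Fintype.card_fun, Fintype.card_bool]
  push_cast
  rw [div_pow, ← pow_mul, mul_add_one, pow_add]
  ring

lemma dinf_addr {d : ℕ} (hd : 0 < d) (a : Fin d → Bool) : dinf hd (addr a) = ((2 : ℝ) ^ d)⁻¹ := by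
  simp only [dinf, addrForm_dupdate_sub_div_two, sum_g_sq]
  field_simp

lemma two_pow_mul_sqrt_inv_two_pow (d : ℕ) :
    (2 : ℝ) ^ d * √((2 : ℝ) ^ d)⁻¹ = (2 : ℝ) ^ ((d : ℝ) / 2) := by
  rw [Real.sqrt_inv, ← div_eq_mul_inv, Real.div_sqrt, Real.sqrt_eq_rpow, ← Real.rpow_natCast,
    ← Real.rpow_mul zero_le_two, mul_one_div]

theorem stmt12 {d : ℕ} (hd : 0 < d) :
    (∀ a : Fin d → Bool, dinf hd (addr a) = ((2 : ℝ) ^ d)⁻¹) ∧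
      ∑ i : Fin (2 ^ d), Real.sqrt (dinf hd i) = (2 : ℝ) ^ ((d : ℝ) / 2) := by
  have hinf : ∀ i, dinf hd i = ((2 : ℝ) ^ d)⁻¹ := addr_bijective.surjective.forall.2 (dinf_addr hd)
  refine ⟨dinf_addr hd, ?_⟩
  simp only [hinf, Finset.sum_const, Finset.card_univ, Fintype.card_fin, nsmul_eq_mul]
  push_cast
  exact two_pow_mul_sqrt_inv_two_pow d

end AddrExample
end
end
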